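/- Let 𝔤 be a Lie algebra over ℂ and 𝔤[t] = ⊕_{n≥0} 𝔤 t^n with bracket [g t^i, h t^j] = [g,h] t^{i+j}. If 𝔤 is simple and x ∈ 𝔤 is a nonzero element, then 𝔤[t] is generated as a Lie algebra by 𝔤 t^0 together with x t. -/

import Mathlib

open TensorProduct

/-- The current algebra `𝔤[t] = 𝔤 ⊗ ℂ[t]` is a Lie algebra over `ℂ` (by restriction of
scalars from `ℂ[t]`), with bracket `[g tⁱ, h tʲ] = [g,h] t^{i+j}`. -/
noncomputable instance currentAlgebra.instLieAlgebra (𝔤 : Type*) [LieRing 𝔤] [LieAlgebra ℂ 𝔤] :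
    LieAlgebra ℂ (Polynomial ℂ ⊗[ℂ] 𝔤) where
  lie_smul c x y := by
    rw [← algebraMap_smul (Polynomial ℂ) c y, ← algebraMap_smul (Polynomial ℂ) c ⁅x, y⁆,
      ]
    exact lie_smul (R := Polynomial ℂ) (L := Polynomial ℂ ⊗[ℂ] 𝔤) (M := Polynomial ℂ ⊗[ℂ] 𝔤) _ _ _

/-- If `𝔤` is a finite-dimensional simple complex Lie algebra and `x ∈ 𝔤` is nonzero, then
the current algebra `𝔤[t] = ℂ[t] ⊗ 𝔤` is generated as a Lie algebra by `𝔤 t⁰` together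
with `x t`. -/
theorem stmt_11 (𝔤 : Type*) [LieRing 𝔤] [LieAlgebra ℂ 𝔤] [FiniteDimensional ℂ 𝔤]
    [LieAlgebra.IsSimple ℂ 𝔤] (x : 𝔤) (hx : x ≠ 0) :
    LieSubalgebra.lieSpan ℂ (Polynomial ℂ ⊗[ℂ] 𝔤)
      (Set.range (fun g : 𝔤 => (1 : Polynomial ℂ) ⊗ₜ[ℂ] g) ∪ {Polynomial.X ⊗ₜ[ℂ] x}) = ⊤ := by
  set S := LieSubalgebra.lieSpan ℂ (Polynomial ℂ ⊗[ℂ] 𝔤)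
      (Set.range (fun g : 𝔤 => (1 : Polynomial ℂ) ⊗ₜ[ℂ] g) ∪ {Polynomial.X ⊗ₜ[ℂ] x}) with hS
  have h1 : ∀ g : 𝔤, (1 : Polynomial ℂ) ⊗ₜ[ℂ] g ∈ S :=
    fun g => LieSubalgebra.subset_lieSpan (Or.inl ⟨g, rfl⟩)
  have hX : Polynomial.X ⊗ₜ[ℂ] x ∈ S :=
    LieSubalgebra.subset_lieSpan (Or.inr rfl)
  have key : ∀ n : ℕ, ∀ g : 𝔤, (Polynomial.X ^ n : Polynomial ℂ) ⊗ₜ[ℂ] g ∈ S := by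
    intro n
    induction n with
    | zero => intro g; simpa using h1 g
    | succ n ih =>
      -- The set of g with X^(n+1) ⊗ g ∈ S is a Lie ideal of 𝔤.
      let I : LieIdeal ℂ 𝔤 :=
        { carrier := {g : 𝔤 | (Polynomial.X ^ (n + 1) : Polynomial ℂ) ⊗ₜ[ℂ] g ∈ S}
          add_mem' := fun {a b} ha hb => by
            simpa [TensorProduct.tmul_add] using S.add_mem ha hb
          zero_mem' := by simpa using S.zero_mem
          smul_mem' := fun c a ha => by
            simpa [TensorProduct.tmul_smul] using S.smul_mem c ha
          lie_mem := fun {y m} hm => by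
            have := S.lie_mem (h1 y) hm
            rwa [LieAlgebra.ExtendScalars.bracket_tmul, one_mul] at this }
      have hxI : ∀ g : 𝔤, ⁅x, g⁆ ∈ I := by
        intro g
        have := S.lie_mem hX (ih g)
        rw [LieAlgebra.ExtendScalars.bracket_tmul, ← pow_succ'] at this
        exact this
      have hI : I = ⊤ := by
        rcases LieAlgebra.IsSimple.eq_bot_or_eq_top I with h | h
        · exfalso
          have hc : x ∈ LieAlgebra.center ℂ 𝔤 := by
            intro g
            have := hxI g
            rw [h, LieSubmodule.mem_bot] at this
            rw [← lie_skew, this, neg_zero]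
          rw [LieAlgebra.center_eq_bot, LieSubmodule.mem_bot] at hc
          exact hx hc
        · exact h
      intro g
      have : g ∈ I := hI ▸ LieSubmodule.mem_top g
      exact this
  have hpg : ∀ (p : Polynomial ℂ) (g : 𝔤), p ⊗ₜ[ℂ] g ∈ S := by
    intro p g
    induction p using Polynomial.induction_on' with
    | add p q hp hq => simpa [TensorProduct.add_tmul] using S.add_mem hp hq
    | monomial n a =>
      have : (Polynomial.monomial n a : Polynomial ℂ) ⊗ₜ[ℂ] g
          = a • ((Polynomial.X ^ n : Polynomial ℂ) ⊗ₜ[ℂ] g) := by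
        rw [← Polynomial.C_mul_X_pow_eq_monomial, ← Polynomial.smul_eq_C_mul,
          TensorProduct.smul_tmul', ]
      rw [this]
      exact S.smul_mem a (key n g)
  rw [eq_top_iff]
  intro z _
  induction z using TensorProduct.induction_on with
  | zero => exact S.zero_mem
  | tmul p g => exact hpg p g
  | add a b ha hb => exact S.add_mem (ha trivial) (hb trivial)
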